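/- arXiv:1706.09154 — 5 statements merged into one kernel-verified Lean document; each statement's English description precedes it below -/
import Mathlib

section
/- Let K and M be compact Hausdorff spaces and let f: M → K be a continuous surjection. If 𝒞 is a maximal chain of closed subsets of M, then f(𝒞) = {f(C) : C ∈ 𝒞} is a maximal chain of closed subsets of K. -/
/-!
Given a closed `D ⊆ K` comparable with every `f '' C`, `C ∈ 𝒞`, let `E` be the intersection of
`f ⁻¹' D` with all `C ∈ 𝒞` such that `D ⊆ f '' C`. Every other member of the chain maps into `D`
and lies below each of those `C` (otherwise its image would contain `D`), hence inside `E`; so `E`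
is comparable with all of `𝒞` and belongs to `𝒞` by maximality. By compactness of the fibres of `f`, the image of the
intersection of a chain of closed sets is the intersection of the images, which gives
`f '' E = D`.
-/

open Set Function

theorem Continuous.image_sInter_of_isChain {X Y : Type*} [TopologicalSpace X]
    [TopologicalSpace Y] [CompactSpace X] [T1Space Y] {f : X → Y} (hf : Continuous f)
    (hsurj : Surjective f) {𝒜 : Set (Set X)} (hchain : IsChain (· ⊆ ·) 𝒜)
    (hcl : ∀ C ∈ 𝒜, IsClosed C) : f '' ⋂₀ 𝒜 = ⋂ C ∈ 𝒜, f '' C := by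
  refine (image_sInter_subset 𝒜 f).antisymm fun y hy => ?_
  rcases 𝒜.eq_empty_or_nonempty with rfl | hne
  · simp [hsurj.range_eq]
  have : Nonempty 𝒜 := hne.to_subtype
  have hdir : DirectedOn (· ⊇ ·) 𝒜 :=
    IsChain.directedOn (r := fun a b : Set X => a ⊇ b) hchain.symm
  have hfibre : IsClosed (f ⁻¹' {y}) := isClosed_singleton.preimage hf
  obtain ⟨x, hx⟩ := IsCompact.nonempty_iInter_of_directed_nonempty_isCompact_isClosed
    (fun C : 𝒜 => f ⁻¹' {y} ∩ C)
    (hdir.directed_val.mono_comp _ fun _ _ => inter_subset_inter_right _)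
    (fun C => by obtain ⟨x, hxC, rfl⟩ := mem_iInter₂.mp hy C C.2; exact ⟨x, rfl, hxC⟩)
    (fun C => (hfibre.inter (hcl C C.2)).isCompact)
    (fun C => hfibre.inter (hcl C C.2))
  simp only [mem_iInter, mem_inter_iff, mem_preimage, mem_singleton_iff] at hx
  exact ⟨x, fun C hC => (hx ⟨C, hC⟩).2, (hx ⟨_, hne.some_mem⟩).1⟩

theorem isChain_insert_sInter_inter_preimage {M K : Type*} {f : M → K} {𝒞 : Set (Set M)}
    {D : Set K} (hchain : IsChain (· ⊆ ·) 𝒞) (hD : IsChain (· ⊆ ·) (insert D (image f '' 𝒞))) :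
    IsChain (· ⊆ ·) (insert (⋂₀ {C ∈ 𝒞 | D ⊆ f '' C} ∩ f ⁻¹' D) 𝒞) := by
  refine hchain.insert fun C hC _ => ?_
  by_cases hDC : D ⊆ f '' C
  · exact Or.inl (inter_subset_left.trans (sInter_subset_of_mem ⟨hC, hDC⟩))
  have hCD : f '' C ⊆ D :=
    (hD.total (mem_insert _ _) (mem_insert_of_mem _ ⟨C, hC, rfl⟩)).resolve_left hDC
  refine Or.inr (subset_inter (subset_sInter fun A hA => ?_) (image_subset_iff.mp hCD))
  exact (hchain.total hC hA.1).resolve_right fun hAC => hDC (hA.2.trans (image_mono hAC))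

theorem stmt_0_general {M K : Type*} [TopologicalSpace M] [TopologicalSpace K]
    [CompactSpace M] [T2Space K]
    (f : M → K) (hf : Continuous f) (hsurj : Function.Surjective f)
    (𝒞 : Set (Set M)) (hcl : ∀ C ∈ 𝒞, IsClosed C)
    (hchain : IsChain (· ⊆ ·) 𝒞)
    (hmax : ∀ C : Set M, IsClosed C → IsChain (· ⊆ ·) (insert C 𝒞) → C ∈ 𝒞) :
    (∀ D ∈ (Set.image f) '' 𝒞, IsClosed D) ∧
    IsChain (· ⊆ ·) ((Set.image f) '' 𝒞) ∧
    (∀ D : Set K, IsClosed D → IsChain (· ⊆ ·) (insert D ((Set.image f) '' 𝒞)) →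
      D ∈ (Set.image f) '' 𝒞) := by
  refine ⟨?_, hchain.image_of_map_rel _ _ (image f) fun _ _ => image_mono,
    fun D hD hDchain => ?_⟩
  · rintro _ ⟨C, hC, rfl⟩
    exact ((hcl C hC).isCompact.image hf).isClosed
  set 𝒜 := {C ∈ 𝒞 | D ⊆ f '' C}
  have hE : IsClosed (⋂₀ 𝒜 ∩ f ⁻¹' D) :=
    (isClosed_sInter fun C hC => hcl C hC.1).inter (hD.preimage hf)
  refine ⟨_, hmax _ hE (isChain_insert_sInter_inter_preimage hchain hDchain), ?_⟩
  rw [image_inter_preimage,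
    hf.image_sInter_of_isChain hsurj (hchain.mono (sep_subset _ _)) fun C hC => hcl C hC.1]
  exact inter_eq_right.mpr (subset_iInter₂ fun _ hC => hC.2)

/-- The image of a maximal chain of closed subsets under a continuous
surjection between compact Hausdorff spaces is a maximal chain of closed subsets. -/
theorem stmt_0 {M K : Type*} [TopologicalSpace M] [TopologicalSpace K]
    [CompactSpace M] [CompactSpace K] [T2Space M] [T2Space K]
    (f : M → K) (hf : Continuous f) (hsurj : Function.Surjective f)
    (𝒞 : Set (Set M)) (hcl : ∀ C ∈ 𝒞, IsClosed C)
    (hchain : IsChain (· ⊆ ·) 𝒞)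
    (hmax : ∀ C : Set M, IsClosed C → IsChain (· ⊆ ·) (insert C 𝒞) → C ∈ 𝒞) :
    (∀ D ∈ (Set.image f) '' 𝒞, IsClosed D) ∧
    IsChain (· ⊆ ·) ((Set.image f) '' 𝒞) ∧
    (∀ D : Set K, IsClosed D → IsChain (· ⊆ ·) (insert D ((Set.image f) '' 𝒞)) →
      D ∈ (Set.image f) '' 𝒞) :=
  stmt_0_general f hf hsurj 𝒞 hcl hchain hmax
end

section
/- Let (Aₙ)ₙ be a sequence of finite fans with epimorphisms fⁿ⁺¹ₙ: Aₙ₊₁ → Aₙ, let P ⊆ ∏ₙ Aₙ be the inverse limit (each Aₙ discrete, P with the subspace topology of the product) with projection maps f^∞ₙ: P → Aₙ, and define the partial order x ⪯_P y iff f^∞ₙ(x) ⪯_{Aₙ} f^∞ₙ(y) for every n. Then every chain of downwards closed closed subsets of P that is maximal among chains of downwards closed closed subsets is in fact a maximal chain of closed subsets of P (i.e., no closed set whatsoever can be added to it keeping it a chain). -/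
/-- A finite fan: a finite poset with a least element (the root) such that the
set of predecessors of any element is linearly ordered, and the set of successors
of any non-root element is linearly ordered. -/
structure FiniteFan where
  carrier : Type
  fintype : Fintype carrier
  ord : PartialOrder carrier
  root : carrier
  root_le : ∀ a : carrier, ord.le root a
  down_chain : ∀ a x y : carrier, ord.le x a → ord.le y a → ord.le x y ∨ ord.le y x
  up_chain : ∀ a : carrier, a ≠ root →
    ∀ x y : carrier, ord.le a x → ord.le a y → ord.le x y ∨ ord.le y x

attribute [instance] FiniteFan.fintype

/-- `t` is an immediate successor of `s` in the fan `A`. -/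
def FiniteFan.covby (A : FiniteFan) (s t : A.carrier) : Prop :=
  A.ord.lt s t ∧ ∀ p : A.carrier, A.ord.lt s p → ¬ A.ord.lt p t

/-- The relation `R^A` : `R^A(s,t)` iff `s = t` or `t` is an immediate successor of `s`. -/
def FiniteFan.R (A : FiniteFan) (s t : A.carrier) : Prop :=
  s = t ∨ A.covby s t

/-- An epimorphism of finite fans: a surjection with `R^B(s,t) → R^A(φ s, φ t)`. -/
def FanEpi (B A : FiniteFan) (φ : B.carrier → A.carrier) : Prop :=
  Function.Surjective φ ∧ ∀ s t : B.carrier, B.R s t → A.R (φ s) (φ t)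

/-- A downwards closed subset of a finite fan. -/
def FiniteFan.DownClosed (A : FiniteFan) (C : Set A.carrier) : Prop :=
  ∀ x y : A.carrier, A.ord.le x y → y ∈ C → x ∈ C

/-- A downwards closed maximal chain on a finite fan: a family of downwards closed
subsets linearly ordered by inclusion, maximal among such families. -/
def DCMaxChain (A : FiniteFan) (𝒞 : Set (Set A.carrier)) : Prop :=
  (∀ C ∈ 𝒞, A.DownClosed C) ∧ IsChain (· ⊆ ·) 𝒞 ∧
  ∀ C : Set A.carrier, A.DownClosed C → IsChain (· ⊆ ·) (insert C 𝒞) → C ∈ 𝒞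

/-- An epimorphism in the class `F_c`: a fan epimorphism mapping the chain onto the chain. -/
def FcEpi (B A : FiniteFan) (𝒞B : Set (Set B.carrier)) (𝒞A : Set (Set A.carrier))
    (φ : B.carrier → A.carrier) : Prop :=
  FanEpi B A φ ∧ (Set.image φ) '' 𝒞B = 𝒞A

/-- A branch of a fan: a maximal linearly ordered subset. -/
def FiniteFan.IsBranch (A : FiniteFan) (b : Set A.carrier) : Prop :=
  IsChain A.ord.le b ∧ ∀ b' : Set A.carrier, IsChain A.ord.le b' → b ⊆ b' → b' = b

/-- The height of a finite fan: the maximal `n` such that some branch has `n+1` elements. -/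
noncomputable def FiniteFan.height (A : FiniteFan) : ℕ :=
  sSup {n : ℕ | ∃ b : Set A.carrier, A.IsBranch b ∧ b.ncard = n + 1}

/-- The width of a finite fan: the number of its branches. -/
noncomputable def FiniteFan.width (A : FiniteFan) : ℕ :=
  {b : Set A.carrier | A.IsBranch b}.ncard

/-- A chain on a finite fan is canonical if there is an enumeration `b₁,…,bₙ` of the
branches such that whenever `C` is in the chain and `C ∩ b_j ≠ ∅`, then `b_i ⊆ C`
for all `i < j`. -/
def Canonical (A : FiniteFan) (𝒞 : Set (Set A.carrier)) : Prop :=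
  ∃ (n : ℕ) (b : Fin n → Set A.carrier),
    (∀ i, A.IsBranch (b i)) ∧ Function.Injective b ∧
    (∀ b' : Set A.carrier, A.IsBranch b' → ∃ i, b' = b i) ∧
    ∀ C ∈ 𝒞, ∀ i j : Fin n, i < j → (C ∩ b j).Nonempty → b i ⊆ C

/-- Membership in the class `F_cc`: a downwards closed maximal chain which is canonical,
on a fan all of whose branches have the same height. -/
def Fcc (A : FiniteFan) (𝒞 : Set (Set A.carrier)) : Prop :=
  DCMaxChain A 𝒞 ∧ Canonical A 𝒞 ∧ ∃ k : ℕ, ∀ b : Set A.carrier, A.IsBranch b → b.ncard = k + 1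

/-- Finite fans carry the discrete topology. -/
instance (A : FiniteFan) : TopologicalSpace A.carrier := ⊥

instance (A : FiniteFan) : DiscreteTopology A.carrier := ⟨rfl⟩

/-- The inverse limit of a sequence of finite fans along the maps `f n`. -/
def InvLim (A : ℕ → FiniteFan) (f : ∀ n, (A (n + 1)).carrier → (A n).carrier) : Type :=
  { x : ∀ n, (A n).carrier // ∀ n, f n (x (n + 1)) = x n }

/-- The inverse limit carries the topology inherited from the product of the discrete
spaces `A n`. -/
instance (A : ℕ → FiniteFan) (f : ∀ n, (A (n + 1)).carrier → (A n).carrier) :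
    TopologicalSpace (InvLim A f) :=
  inferInstanceAs (TopologicalSpace { x : ∀ n, (A n).carrier // ∀ n, f n (x (n + 1)) = x n })

/-- The partial order on the inverse limit: `x ⪯_P y` iff the projections satisfy
`x n ⪯_{Aₙ} y n` for every `n`. -/
def InvLim.le (A : ℕ → FiniteFan) (f : ∀ n, (A (n + 1)).carrier → (A n).carrier)
    (x y : InvLim A f) : Prop :=
  ∀ n, (A n).ord.le (x.1 n) (y.1 n)

/-- A downwards closed subset of the inverse limit. -/
def InvLim.DownClosed (A : ℕ → FiniteFan) (f : ∀ n, (A (n + 1)).carrier → (A n).carrier)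
    (C : Set (InvLim A f)) : Prop :=
  ∀ x y : InvLim A f, InvLim.le A f x y → y ∈ C → x ∈ C

/-!
A closed set `C` comparable with every member of the chain lies between the largest member `D`
below it (the closure of the union of the members inside `C`) and the smallest member `U` above
it. For `r ∈ U \ D`, the set `D ∪ ↓r` is again closed and downwards closed and lies between `D`
and `U`, so by maximality it is a member, hence contains `U`. So any two points of `U \ D` lie
below each other, `U \ D` has at most one point, and `C` is `D` or `U`.

That closures of downwards closed sets are downwards closed comes from the lifting property of
fan epimorphisms: `a ≤ φ t` implies `a = φ s` for some `s ≤ t`, which propagates to the inverse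
limit by dependent choice.
-/

open Set Filter Topology

instance FiniteFan.instPartialOrder (A : FiniteFan) : PartialOrder A.carrier := A.ord

namespace FiniteFan

variable {A : FiniteFan} {s t : A.carrier}

theorem covby_iff_covBy : A.covby s t ↔ s ⋖ t :=
  ⟨fun h => ⟨h.1, fun p => h.2 p⟩, fun h => ⟨h.1, fun p => @h.2 p⟩⟩

theorem R.le (h : A.R s t) : s ≤ t := by
  rcases h with rfl | h
  exacts [le_rfl, h.1.le]

end FiniteFan

namespace FanEpi

variable {B A : FiniteFan} {φ : B.carrier → A.carrier}

theorem monotone (h : FanEpi B A φ) : Monotone φ := by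
  classical
  have : LocallyFiniteOrder B.carrier := Fintype.toLocallyFiniteOrder
  exact (monotone_iff_forall_covBy φ).2 fun s t hst =>
    (h.2 s t (Or.inr (FiniteFan.covby_iff_covBy.2 hst))).le

theorem map_root (h : FanEpi B A φ) : φ B.root = A.root := by
  obtain ⟨b, hb⟩ := h.1 A.root
  exact le_antisymm (hb ▸ h.monotone (B.root_le b)) (A.root_le _)

theorem exists_le_map_eq (h : FanEpi B A φ) {t : B.carrier} {a : A.carrier} (ha : a ≤ φ t) :
    ∃ s ≤ t, φ s = a := by
  classical
  have : LocallyFiniteOrder B.carrier := Fintype.toLocallyFiniteOrder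
  have hroot : Relation.ReflTransGen (· ⋖ ·) B.root t := le_iff_reflTransGen_covBy.1 (B.root_le t)
  induction hroot generalizing a with
  | refl =>
    rw [h.map_root] at ha
    exact ⟨B.root, le_rfl, by rw [h.map_root, le_antisymm ha (A.root_le a)]⟩
  | @tail u t _ hut ih =>
    rcases ha.eq_or_lt with rfl | hlt
    · exact ⟨t, le_rfl, rfl⟩
    have hau : a ≤ φ u := by
      rcases h.2 u t (Or.inr (FiniteFan.covby_iff_covBy.2 hut)) with heq | hcov
      · exact heq ▸ ha
      · rcases A.down_chain (φ t) a (φ u) ha hcov.1.le with hau | hua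
        · exact hau
        -- `φ u ⋖ φ t` leaves no room for `a` strictly between them
        · exact hua.lt_or_eq.elim (fun hua => absurd hlt (hcov.2 a hua)) ge_of_eq
    obtain ⟨s, hsu, rfl⟩ := ih hau
    exact ⟨s, hsu.trans hut.le, rfl⟩

end FanEpi

namespace InvLim

variable {A : ℕ → FiniteFan} {f : ∀ n, (A (n + 1)).carrier → (A n).carrier}

instance instPartialOrder : PartialOrder (InvLim A f) where
  le := InvLim.le A f
  le_refl x n := le_refl (x.1 n)
  le_trans _ _ _ hxy hyz n := (hxy n).trans (hyz n)
  le_antisymm x y hxy hyx := Subtype.ext (funext fun n => (hxy n).antisymm (hyx n))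

theorem isLowerSet_iff_downClosed {s : Set (InvLim A f)} :
    IsLowerSet s ↔ InvLim.DownClosed A f s :=
  ⟨fun h _ _ hxy hy => h hxy hy, fun h _ _ hxy hy => h _ _ hxy hy⟩

theorem apply_eq_of_apply_eq {x y : InvLim A f} {k n : ℕ} (hkn : k ≤ n) (h : x.1 n = y.1 n) :
    x.1 k = y.1 k := by
  induction n, hkn using Nat.le_induction with
  | base => exact h
  | succ n _ ih => exact ih (by rw [← x.2 n, ← y.2 n, h])

theorem continuous_apply (n : ℕ) : Continuous fun x : InvLim A f => x.1 n :=
  (_root_.continuous_apply n).comp continuous_subtype_val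

theorem isClosed_Iic (r : InvLim A f) : IsClosed (Iic r) := by
  have : Iic r = ⋂ n, (fun z : InvLim A f => z.1 n) ⁻¹' Iic (r.1 n) :=
    Set.ext fun _ => by rw [mem_iInter]; rfl
  rw [this]
  exact isClosed_iInter fun n => (isClosed_discrete _).preimage (continuous_apply n)

theorem hasBasis_nhds (x : InvLim A f) :
    (𝓝 x).HasBasis (fun _ => True) fun n => {z : InvLim A f | z.1 n = x.1 n} := by
  have : 𝓝 x = ⨅ n, 𝓟 {z : InvLim A f | z.1 n = x.1 n} := by
    rw [show 𝓝 x = comap Subtype.val (𝓝 x.1) from nhds_induced _ _, nhds_pi, Filter.pi, comap_iInf]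
    simp only [nhds_discrete, comap_pure, comap_principal]
    rfl
  rw [this]
  exact hasBasis_iInf_principal <|
    Antitone.directed_ge fun _ _ hmn _ hz => apply_eq_of_apply_eq hmn hz

def tail (y : InvLim A f) : InvLim (fun n => A (n + 1)) (fun n => f (n + 1)) :=
  ⟨fun n => y.1 (n + 1), fun n => y.2 (n + 1)⟩

theorem exists_le_apply_zero_eq (hf : ∀ n, FanEpi (A (n + 1)) (A n) (f n)) (y : InvLim A f)
    {a : (A 0).carrier} (ha : a ≤ y.1 0) : ∃ z ≤ y, z.1 0 = a := by
  choose g hg_le hg_map using fun n (c : {c : (A n).carrier // c ≤ y.1 n}) =>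
    (hf n).exists_le_map_eq (t := y.1 (n + 1)) (a := c.1) (by rw [y.2 n]; exact c.2)
  let w : ∀ n, {c : (A n).carrier // c ≤ y.1 n} :=
    fun n => Nat.rec ⟨a, ha⟩ (fun n c => ⟨g n c, hg_le n c⟩) n
  exact ⟨⟨fun n => (w n).1, fun n => hg_map n (w n)⟩, fun n => (w n).2, rfl⟩

theorem exists_le_apply_eq (hf : ∀ n, FanEpi (A (n + 1)) (A n) (f n)) (y : InvLim A f) {n : ℕ}
    {a : (A n).carrier} (ha : a ≤ y.1 n) : ∃ z ≤ y, z.1 n = a := by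
  induction n generalizing A with
  | zero => exact exists_le_apply_zero_eq hf y ha
  | succ n ih =>
    obtain ⟨z, hzy, rfl⟩ := ih (fun k => hf (k + 1)) y.tail ha
    refine ⟨⟨fun k => Nat.casesOn k (f 0 (z.1 0)) z.1, fun k => ?_⟩, fun k => ?_, rfl⟩
    · cases k
      exacts [rfl, z.2 _]
    · cases k
      exacts [y.2 0 ▸ (hf 0).monotone (hzy 0), hzy _]

theorem isLowerSet_closure (hf : ∀ n, FanEpi (A (n + 1)) (A n) (f n)) {s : Set (InvLim A f)}
    (hs : IsLowerSet s) : IsLowerSet (closure s) := by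
  intro y x hxy hy
  refine (mem_closure_iff_nhds_basis (hasBasis_nhds x)).2 fun n _ => ?_
  obtain ⟨y', hy's, hy'y⟩ := (mem_closure_iff_nhds_basis (hasBasis_nhds y)).1 hy n trivial
  obtain ⟨z, hzy', hzx⟩ := exists_le_apply_eq hf y' (a := x.1 n) (hy'y ▸ hxy n)
  exact ⟨z, hs hzy' hy's, hzx⟩

end InvLim

theorem Set.eq_or_eq_of_subsingleton_diff {α : Type*} {D C U : Set α} (hDC : D ⊆ C) (hCU : C ⊆ U)
    (hUD : (U \ D).Subsingleton) : C = D ∨ C = U := by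
  by_contra! h
  obtain ⟨p, hpC, hpD⟩ := not_subset.1 fun hCD => h.1 (hCD.antisymm hDC)
  obtain ⟨q, hqU, hqC⟩ := not_subset.1 fun hUC => h.2 (hCU.antisymm hUC)
  exact hqC (hUD ⟨hCU hpC, hpD⟩ ⟨hqU, fun hqD => hqC (hDC hqD)⟩ ▸ hpC)

section ClosedLowerSetChain

variable {X : Type*} [TopologicalSpace X] [PartialOrder X] {𝒞 : Set (Set X)}

theorem mem_of_isClosed_of_isLowerSet_of_subset_of_subset (hchain : IsChain (· ⊆ ·) 𝒞)
    (hmax : ∀ C, IsClosed C → IsLowerSet C → IsChain (· ⊆ ·) (insert C 𝒞) → C ∈ 𝒞)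
    {D U G : Set X} (hsep : ∀ F ∈ 𝒞, F ⊆ D ∨ U ⊆ F) (hG : IsClosed G) (hG' : IsLowerSet G)
    (hDG : D ⊆ G) (hGU : G ⊆ U) : G ∈ 𝒞 :=
  hmax G hG hG' <| hchain.insert fun F hF _ =>
    (hsep F hF).imp (fun h => h.trans hDG) (fun h => hGU.trans h) |>.symm

theorem subsingleton_diff_of_forall_subset_or_subset (hIic : ∀ r : X, IsClosed (Iic r))
    (hchain : IsChain (· ⊆ ·) 𝒞)
    (hmax : ∀ C, IsClosed C → IsLowerSet C → IsChain (· ⊆ ·) (insert C 𝒞) → C ∈ 𝒞)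
    {D U : Set X} (hsep : ∀ F ∈ 𝒞, F ⊆ D ∨ U ⊆ F) (hD : IsClosed D) (hD' : IsLowerSet D)
    (hU' : IsLowerSet U) (hDU : D ⊆ U) : (U \ D).Subsingleton := by
  have hcover : ∀ r ∈ U \ D, U ⊆ D ∪ Iic r := fun r ⟨hrU, hrD⟩ => by
    have hmem : D ∪ Iic r ∈ 𝒞 :=
      mem_of_isClosed_of_isLowerSet_of_subset_of_subset hchain hmax hsep
        (hD.union (hIic r)) (hD'.union (isLowerSet_Iic r)) subset_union_left
        (union_subset hDU (hU'.Iic_subset hrU))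
    exact (hsep _ hmem).resolve_left fun h => hrD (h (Or.inr le_rfl))
  intro p hp q hq
  exact le_antisymm ((hcover q hq hp.1).resolve_left hp.2) ((hcover p hp hq.1).resolve_left hq.2)

theorem mem_of_isChain_insert_of_maximal_closed_lowerSet
    (hIic : ∀ r : X, IsClosed (Iic r))
    (hclosure : ∀ s : Set X, IsLowerSet s → IsLowerSet (closure s))
    (hmem : ∀ C ∈ 𝒞, IsClosed C ∧ IsLowerSet C) (hchain : IsChain (· ⊆ ·) 𝒞)
    (hmax : ∀ C, IsClosed C → IsLowerSet C → IsChain (· ⊆ ·) (insert C 𝒞) → C ∈ 𝒞)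
    {C : Set X} (hC : IsClosed C) (hCchain : IsChain (· ⊆ ·) (insert C 𝒞)) : C ∈ 𝒞 := by
  let D := closure (⋃₀ {E ∈ 𝒞 | E ⊆ C})
  let U := ⋂₀ {E ∈ 𝒞 | C ⊆ E}
  have hDC : D ⊆ C := closure_minimal (sUnion_subset fun E hE => hE.2) hC
  have hCU : C ⊆ U := subset_sInter fun E hE => hE.2
  have hsep : ∀ F ∈ 𝒞, F ⊆ D ∨ U ⊆ F := fun F hF =>
    (hCchain.total (mem_insert_of_mem _ hF) (mem_insert _ _)).imp
      (fun h => (subset_sUnion_of_mem (show F ∈ {E ∈ 𝒞 | E ⊆ C} from ⟨hF, h⟩)).trans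
        subset_closure)
      (fun h => sInter_subset_of_mem (show F ∈ {E ∈ 𝒞 | C ⊆ E} from ⟨hF, h⟩))
  have hD' : IsLowerSet D := hclosure _ (isLowerSet_sUnion fun E hE => (hmem E hE.1).2)
  have hU : IsClosed U := isClosed_sInter fun E hE => (hmem E hE.1).1
  have hU' : IsLowerSet U := isLowerSet_sInter fun E hE => (hmem E hE.1).2
  have hDU : D ⊆ U := hDC.trans hCU
  have hgap : (U \ D).Subsingleton :=
    subsingleton_diff_of_forall_subset_or_subset hIic hchain hmax hsep isClosed_closure hD' hU' hDU
  rcases eq_or_eq_of_subsingleton_diff hDC hCU hgap with h | h <;> rw [h]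
  · exact mem_of_isClosed_of_isLowerSet_of_subset_of_subset hchain hmax hsep isClosed_closure hD'
      subset_rfl hDU
  · exact mem_of_isClosed_of_isLowerSet_of_subset_of_subset hchain hmax hsep hU hU' hDU subset_rfl

end ClosedLowerSetChain

/-- On the inverse limit `P` of a sequence of finite fans, every chain of
downwards closed closed subsets which is maximal among such chains is a maximal chain
of closed subsets of `P`. -/
theorem stmt_1 (A : ℕ → FiniteFan) (f : ∀ n, (A (n + 1)).carrier → (A n).carrier)
    (hf : ∀ n, FanEpi (A (n + 1)) (A n) (f n))
    (𝒞 : Set (Set (InvLim A f)))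
    (hmem : ∀ C ∈ 𝒞, IsClosed C ∧ InvLim.DownClosed A f C)
    (hchain : IsChain (· ⊆ ·) 𝒞)
    (hmax : ∀ C : Set (InvLim A f), IsClosed C → InvLim.DownClosed A f C →
      IsChain (· ⊆ ·) (insert C 𝒞) → C ∈ 𝒞) :
    ∀ C : Set (InvLim A f), IsClosed C → IsChain (· ⊆ ·) (insert C 𝒞) → C ∈ 𝒞 := by
  simp only [← InvLim.isLowerSet_iff_downClosed] at hmem hmax
  exact fun C hC hCchain => mem_of_isChain_insert_of_maximal_closed_lowerSet
    InvLim.isClosed_Iic (fun _ => InvLim.isLowerSet_closure hf) hmem hchain hmax hC hCchain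
end

section
/- Let G be a Polish group and H a closed subgroup of G. Equip G/H with the quotient of the right uniformity of G, i.e., the uniformity generated by the sets U_V = {(xH, yH) : x y⁻¹ ∈ V} for V an open symmetric neighbourhood of the identity of G. If G/H is precompact, then the continuous action of G on G/H by left translations, g·(xH) = (gx)H, extends to a continuous action of G on the completion of the uniform space G/H. -/
/-!
Each translation `q ↦ g • q` of `G ⧸ H` is uniformly continuous for the right uniformity, since
`(g x)(g y)⁻¹ = g (x y⁻¹) g⁻¹`, so it extends to the completion, and the extensions form an action.
Continuity of conjugation at `(g, 1)` makes the translations uniformly equicontinuous along `𝓝 g`;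
this survives the passage to the completion because the closure of the image of an entourage is
an entourage. Joint continuity at `(g, ξ)` then follows by approximating `ξ` by a point of `G ⧸ H`,
at which the orbit map is continuous because `(g x)(g₀ x)⁻¹ = g g₀⁻¹`.
-/

open UniformSpace Filter Set Topology
open scoped Uniformity

section Equicontinuity

variable {ι α β : Type*} [UniformSpace α] [UniformSpace β]

/-- The set of indices may shrink with the entourage: translations of `G ⧸ H` by a fixed
neighbourhood of `g` need not be uniformly equicontinuous, but they are along `𝓝 g`. -/
def UniformEquicontinuousAlong (l : Filter ι) (F : ι → α → β) : Prop :=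
  Tendsto (fun q : ι × (α × α) => (F q.1 q.2.1, F q.1 q.2.2)) (l ×ˢ 𝓤 α) (𝓤 β)

theorem UniformEquicontinuousAlong.uniformContinuous {l : Filter ι} {F : ι → α → β}
    (hF : UniformEquicontinuousAlong l F) {i : ι} (hi : pure i ≤ l) : UniformContinuous (F i) :=
  hF.comp ((tendsto_const_pure.mono_right hi).prodMk tendsto_id)

theorem UniformSpace.Completion.closure_image_coe_mem_uniformity {W : Set (α × α)}
    (hW : W ∈ 𝓤 α) :
    closure ((fun p : α × α => ((p.1 : Completion α), (p.2 : Completion α))) '' W)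
      ∈ 𝓤 (Completion α) := by
  rw [← Completion.comap_coe_eq_uniformity] at hW
  obtain ⟨U, hU, hUW⟩ := hW
  refine mem_of_superset (interior_mem_uniformity hU) <|
    ((denseRange_coe.prodMap denseRange_coe).open_subset_closure_inter isOpen_interior).trans
      (closure_mono ?_)
  rintro _ ⟨hp, ⟨a, b⟩, rfl⟩
  exact ⟨(a, b), hUW (interior_subset hp : ((a : Completion α), (b : Completion α)) ∈ U), rfl⟩

theorem UniformEquicontinuousAlong.completion_map {l : Filter ι} {F : ι → α → β}
    (hF : UniformEquicontinuousAlong l F) (hFc : ∀ i, UniformContinuous (F i)) :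
    UniformEquicontinuousAlong l (fun i => Completion.map (F i)) := by
  intro U hU
  rw [mem_map]
  obtain ⟨U', ⟨hU', hU'c⟩, hU'U⟩ := uniformity_hasBasis_closed.mem_iff.1 hU
  obtain ⟨T, hT, W, hW, hTW⟩ := mem_prod_iff.1 <| hF <|
    Completion.comap_coe_eq_uniformity β ▸ preimage_mem_comap hU'
  refine mem_of_superset (prod_mem_prod hT (Completion.closure_image_coe_mem_uniformity hW)) ?_
  rintro ⟨i, p⟩ ⟨hi, hp⟩
  have hclosed : IsClosed ((fun p : Completion α × Completion α =>
      (Completion.map (F i) p.1, Completion.map (F i) p.2)) ⁻¹' U') :=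
    hU'c.preimage <| (Completion.continuous_map.comp continuous_fst).prodMk
      (Completion.continuous_map.comp continuous_snd)
  refine hU'U (closure_minimal ?_ hclosed hp)
  rintro _ ⟨⟨x, y⟩, hxy, rfl⟩
  simpa only [mem_preimage, Completion.map_coe (hFc i)] using
    hTW (show (i, x, y) ∈ T ×ˢ W from ⟨hi, hxy⟩)

end Equicontinuity

theorem continuous_uncurry_of_uniformEquicontinuousAlong_of_denseRange
    {G Z X Y : Type*} [TopologicalSpace G] [UniformSpace X] [UniformSpace Y]
    {F : G → X → Y} {e : Z → X} (he : DenseRange e)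
    (hF : ∀ g, UniformEquicontinuousAlong (𝓝 g) F) (hFe : ∀ z, Continuous (F · (e z))) :
    Continuous (fun p : G × X => F p.1 p.2) := by
  refine continuous_iff_continuousAt.2 fun ⟨g₀, x₀⟩ => Uniform.tendsto_nhds_right.2 ?_
  intro U hU
  rw [mem_map]
  obtain ⟨V, hV, -, hVU⟩ := comp_comp_symm_mem_uniformity_sets hU
  obtain ⟨T, hT, W, hW, hTW⟩ := mem_prod_iff.1 (hF g₀ hV)
  obtain ⟨W', hW', hW'symm, hW'W⟩ := comp_symm_mem_uniformity_sets hW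
  obtain ⟨z, hz⟩ := he.mem_nhds (ball_mem_nhds x₀ hW')
  have hclose : ∀ᶠ g in 𝓝 g₀, (F g₀ (e z), F g (e z)) ∈ V :=
    Uniform.tendsto_nhds_right.1 ((hFe z).tendsto g₀) hV
  filter_upwards [prod_mem_nhds (inter_mem hT hclose) (ball_mem_nhds x₀ hW')]
    with ⟨g, x⟩ ⟨⟨hgT, hg⟩, hx⟩
  have h₁ : (F g₀ x₀, F g₀ (e z)) ∈ V :=
    hTW (show (g₀, x₀, e z) ∈ T ×ˢ W from
      ⟨mem_of_mem_nhds hT, hW'W ⟨x₀, refl_mem_uniformity hW', hz⟩⟩)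
  have h₃ : (F g (e z), F g x) ∈ V :=
    hTW (show (g, e z, x) ∈ T ×ˢ W from ⟨hgT, hW'W ⟨x₀, hW'symm.symm _ _ hz, hx⟩⟩)
  exact hVU ⟨_, ⟨_, h₁, hg⟩, h₃⟩

theorem UniformSpace.Completion.continuousSMul {M X : Type*} [Monoid M] [TopologicalSpace M]
    [UniformSpace X] [MulAction M X] [UniformContinuousConstSMul M X]
    (hequi : ∀ m : M, UniformEquicontinuousAlong (𝓝 m) (fun (m : M) (x : X) => m • x))
    (horbit : ∀ x : X, Continuous fun m : M => m • x) :
    ContinuousSMul M (Completion X) :=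
  ⟨continuous_uncurry_of_uniformEquicontinuousAlong_of_denseRange Completion.denseRange_coe
    (fun m => (hequi m).completion_map uniformContinuous_const_smul)
    (fun x => by
      simp_rw [← Completion.coe_smul]
      exact (Completion.continuous_coe X).comp (horbit x))⟩

namespace QuotientGroup

variable {G : Type*} [Group G]

def rightEntourage (H : Subgroup G) (V : Set G) : Set ((G ⧸ H) × (G ⧸ H)) :=
  {p | ∃ x y : G, (x : G ⧸ H) = p.1 ∧ (y : G ⧸ H) = p.2 ∧ x * y⁻¹ ∈ V}

theorem rightEntourage_mono (H : Subgroup G) {V W : Set G} (hVW : V ⊆ W) :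
    rightEntourage H V ⊆ rightEntourage H W :=
  fun _ ⟨x, y, hx, hy, hxy⟩ => ⟨x, y, hx, hy, hVW hxy⟩

variable [TopologicalSpace G] [IsTopologicalGroup G] {H : Subgroup G} [UniformSpace (G ⧸ H)]

theorem hasBasis_uniformity_rightEntourage
    (hu : ∀ S : Set ((G ⧸ H) × (G ⧸ H)), S ∈ 𝓤 (G ⧸ H) ↔
      ∃ V : Set G, IsOpen V ∧ (1 : G) ∈ V ∧ (∀ g ∈ V, g⁻¹ ∈ V) ∧ rightEntourage H V ⊆ S) :
    (𝓤 (G ⧸ H)).HasBasis (fun V : Set G => V ∈ 𝓝 1) (rightEntourage H) := by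
  refine ⟨fun S => (hu S).trans ⟨fun ⟨V, hVo, hV1, _, hVS⟩ => ⟨V, hVo.mem_nhds hV1, hVS⟩, ?_⟩⟩
  rintro ⟨V, hV, hVS⟩
  refine ⟨interior V ∩ (interior V)⁻¹, isOpen_interior.inter isOpen_interior.inv,
    ⟨mem_interior_iff_mem_nhds.2 hV, by simpa using mem_interior_iff_mem_nhds.2 hV⟩,
    fun g ⟨hg, hg'⟩ => ⟨hg', by simpa using hg⟩,
    (rightEntourage_mono H (inter_subset_left.trans interior_subset)).trans hVS⟩

theorem uniformEquicontinuousAlong_smul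
    (hu : (𝓤 (G ⧸ H)).HasBasis (fun V : Set G => V ∈ 𝓝 1) (rightEntourage H)) (g₀ : G) :
    UniformEquicontinuousAlong (𝓝 g₀) (fun (g : G) (q : G ⧸ H) => g • q) := by
  refine hu.tendsto_right_iff.2 fun V hV => ?_
  have hconj : {p : G × G | p.1 * p.2 * p.1⁻¹ ∈ V} ∈ 𝓝 g₀ ×ˢ 𝓝 1 := by
    rw [← nhds_prod_eq]
    exact (by fun_prop : Continuous fun p : G × G => p.1 * p.2 * p.1⁻¹).continuousAt
      (by simpa using hV)
  obtain ⟨N, hN, W, hW, hNW⟩ := mem_prod_iff.1 hconj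
  refine mem_of_superset (prod_mem_prod hN (hu.mem_of_mem hW)) ?_
  rintro ⟨g, _, _⟩ ⟨hg, x, y, rfl, rfl, hxy⟩
  refine ⟨g * x, g * y, rfl, rfl, ?_⟩
  have hmul : g * x * (g * y)⁻¹ = g * (x * y⁻¹) * g⁻¹ := by group
  exact hmul ▸ hNW (show (g, x * y⁻¹) ∈ N ×ˢ W from ⟨hg, hxy⟩)

theorem tendsto_smul_const_uniformity
    (hu : (𝓤 (G ⧸ H)).HasBasis (fun V : Set G => V ∈ 𝓝 1) (rightEntourage H))
    (q : G ⧸ H) (g₀ : G) :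
    Tendsto (fun g : G => (g • q, g₀ • q)) (𝓝 g₀) (𝓤 (G ⧸ H)) := by
  induction q using QuotientGroup.induction_on with | H x => ?_
  refine hu.tendsto_right_iff.2 fun V hV => ?_
  have hdiv : {g : G | g * g₀⁻¹ ∈ V} ∈ 𝓝 g₀ :=
    (by fun_prop : Continuous fun g : G => g * g₀⁻¹).continuousAt (by simpa using hV)
  filter_upwards [hdiv] with g hg
  refine ⟨g * x, g₀ * x, rfl, rfl, ?_⟩
  have hmul : g * x * (g₀ * x)⁻¹ = g * g₀⁻¹ := by group
  exact hmul ▸ hg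

end QuotientGroup

theorem stmt_3_general {G : Type*} [Group G] [TopologicalSpace G] [IsTopologicalGroup G]
    (H : Subgroup G)
    [u : UniformSpace (G ⧸ H)]
    (hu : ∀ S : Set ((G ⧸ H) × (G ⧸ H)),
      S ∈ uniformity (G ⧸ H) ↔
        ∃ V : Set G, IsOpen V ∧ (1 : G) ∈ V ∧ (∀ g ∈ V, g⁻¹ ∈ V) ∧
          {p : (G ⧸ H) × (G ⧸ H) |
            ∃ x y : G, (x : G ⧸ H) = p.1 ∧ (y : G ⧸ H) = p.2 ∧ x * y⁻¹ ∈ V} ⊆ S) :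
    ∃ a : G → UniformSpace.Completion (G ⧸ H) → UniformSpace.Completion (G ⧸ H),
      Continuous (fun p : G × UniformSpace.Completion (G ⧸ H) => a p.1 p.2) ∧
      (∀ g₁ g₂ : G, ∀ x : UniformSpace.Completion (G ⧸ H), a (g₁ * g₂) x = a g₁ (a g₂ x)) ∧
      (∀ x : UniformSpace.Completion (G ⧸ H), a 1 x = x) ∧
      ∀ g x : G, a g (((x : G ⧸ H) : UniformSpace.Completion (G ⧸ H))) =
        (((g * x : G) : G ⧸ H) : UniformSpace.Completion (G ⧸ H)) := by
  have hbasis := QuotientGroup.hasBasis_uniformity_rightEntourage hu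
  have : UniformContinuousConstSMul G (G ⧸ H) := ⟨fun g =>
    (QuotientGroup.uniformEquicontinuousAlong_smul hbasis g).uniformContinuous (pure_le_nhds g)⟩
  have : ContinuousSMul G (Completion (G ⧸ H)) :=
    Completion.continuousSMul (QuotientGroup.uniformEquicontinuousAlong_smul hbasis)
      fun q => Uniform.continuous_iff'_left.2 (QuotientGroup.tendsto_smul_const_uniformity hbasis q)
  exact ⟨(· • ·), continuous_smul, mul_smul, one_smul G,
    fun g x => (Completion.coe_smul g (x : G ⧸ H)).symm⟩

/-- Let `G` be a Polish group and `H` a closed subgroup. Equip `G/H` with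
the quotient of the right uniformity of `G`, i.e. the uniformity whose entourages are
exactly the supersets of the sets `U_V = {(xH, yH) : x y⁻¹ ∈ V}` for `V` an open
symmetric neighbourhood of the identity. If `G/H` is precompact (totally bounded),
then the action of `G` on `G/H` by left translations extends to a continuous action
of `G` on the completion of `G/H`. -/
theorem stmt_3 {G : Type*} [Group G] [TopologicalSpace G] [IsTopologicalGroup G]
    [PolishSpace G] (H : Subgroup G) (hH : IsClosed (H : Set G))
    [u : UniformSpace (G ⧸ H)]
    (hu : ∀ S : Set ((G ⧸ H) × (G ⧸ H)),
      S ∈ uniformity (G ⧸ H) ↔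
        ∃ V : Set G, IsOpen V ∧ (1 : G) ∈ V ∧ (∀ g ∈ V, g⁻¹ ∈ V) ∧
          {p : (G ⧸ H) × (G ⧸ H) |
            ∃ x y : G, (x : G ⧸ H) = p.1 ∧ (y : G ⧸ H) = p.2 ∧ x * y⁻¹ ∈ V} ⊆ S)
    (hpre : TotallyBounded (Set.univ : Set (G ⧸ H))) :
    ∃ a : G → UniformSpace.Completion (G ⧸ H) → UniformSpace.Completion (G ⧸ H),
      Continuous (fun p : G × UniformSpace.Completion (G ⧸ H) => a p.1 p.2) ∧
      (∀ g₁ g₂ : G, ∀ x : UniformSpace.Completion (G ⧸ H), a (g₁ * g₂) x = a g₁ (a g₂ x)) ∧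
      (∀ x : UniformSpace.Completion (G ⧸ H), a 1 x = x) ∧
      ∀ g x : G, a g (((x : G ⧸ H) : UniformSpace.Completion (G ⧸ H))) =
        (((g * x : G) : G ⧸ H) : UniformSpace.Completion (G ⧸ H)) :=
  stmt_3_general H (u := u) hu
end

section
/- Let K and L be compact zero-dimensional second-countable Hausdorff spaces, let m ≥ 1, let R^K ⊆ K^m and R^L ⊆ L^m be closed m-ary relations, and let f: L → K be a continuous surjection. Define F: Clop(K) → Clop(L) by F(X) = f⁻¹(X), and define the relation S^{Clop(K)} on Clop(K)^m by S^{Clop(K)}(X₁,…,X_m) iff there exist cᵢ ∈ Xᵢ (i = 1,…,m) with R^K(c₁,…,c_m), and similarly S^{Clop(L)} on Clop(L)^m using R^L. Then f satisfies the epimorphism condition for R — that is, for all x₁,…,x_m ∈ K: R^K(x₁,…,x_m) holds iff there exist y₁,…,y_m ∈ L with f(yᵢ) = xᵢ for each i and R^L(y₁,…,y_m) — if and only if F is S-preserving, that is, for all X₁,…,X_m ∈ Clop(K): S^{Clop(K)}(X₁,…,X_m) holds iff S^{Clop(L)}(F(X₁),…,F(X_m)). -/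
/-!
Both sides compare the closed relation `RK` with `E = {f ∘ y | y ∈ RL}`, which is closed as a
continuous image of the compact set `RL`: the epimorphism condition says `RK = E`, and
S-preservation says that `RK` and `E` meet the same boxes `X₁ × ⋯ × X_m` of clopen sets. In a
compact Hausdorff totally disconnected space the clopen boxes form a neighbourhood basis of
`K^m`, so two closed sets meeting the same clopen boxes are equal.
-/

open Set Topology

section ClopenBoxes

variable {ι K : Type*} [TopologicalSpace K] [CompactSpace K] [T2Space K]
  [TotallyDisconnectedSpace K]

theorem mem_closure_iff_forall_isClopen_pi [Finite ι] {C : Set (ι → K)} {x : ι → K} :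
    x ∈ closure C ↔ ∀ X : ι → Set K, (∀ i, IsClopen (X i)) → x ∈ univ.pi X →
      (univ.pi X ∩ C).Nonempty := by
  refine mem_closure_iff_nhds.trans ⟨fun h X hX hx ↦ h _ ?_, fun h s hs ↦ ?_⟩
  · exact set_pi_mem_nhds finite_univ fun i _ ↦ (hX i).isOpen.mem_nhds (hx i trivial)
  · rw [nhds_pi, Filter.mem_pi'] at hs
    obtain ⟨I, t, ht, hts⟩ := hs
    choose X hX hXt using fun i ↦ (nhds_basis_clopen (x i)).mem_iff.1 (ht i)
    obtain ⟨c, hcX, hcC⟩ := h X (fun i ↦ (hX i).2) fun i _ ↦ (hX i).1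
    exact ⟨c, hts fun i _ ↦ hXt i (hcX i trivial), hcC⟩

theorem IsClosed.eq_iff_forall_isClopen_pi [Finite ι] {C D : Set (ι → K)}
    (hC : IsClosed C) (hD : IsClosed D) :
    C = D ↔ ∀ X : ι → Set K, (∀ i, IsClopen (X i)) →
      ((univ.pi X ∩ C).Nonempty ↔ (univ.pi X ∩ D).Nonempty) := by
  refine ⟨fun h _ _ ↦ h ▸ Iff.rfl, fun h ↦ ext fun x ↦ ?_⟩
  rw [← hC.closure_eq, ← hD.closure_eq, mem_closure_iff_forall_isClopen_pi,
    mem_closure_iff_forall_isClopen_pi]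
  exact forall₂_congr fun X hX ↦ imp_congr_right fun _ ↦ h X hX

end ClopenBoxes

theorem stmt_4_general {K L : Type*} [TopologicalSpace K] [TopologicalSpace L]
    [CompactSpace K] [CompactSpace L] [T2Space K]
    [TotallyDisconnectedSpace K]
    {m : ℕ}
    (RK : Set (Fin m → K)) (hRK : IsClosed RK)
    (RL : Set (Fin m → L)) (hRL : IsClosed RL)
    (f : L → K) (hf : Continuous f) :
    ((∀ x : Fin m → K, x ∈ RK ↔
        ∃ y : Fin m → L, (∀ i, f (y i) = x i) ∧ y ∈ RL) ↔
      (∀ X : Fin m → Set K, (∀ i, IsClopen (X i)) →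
        ((∃ c : Fin m → K, (∀ i, c i ∈ X i) ∧ c ∈ RK) ↔
          (∃ c : Fin m → L, (∀ i, c i ∈ f ⁻¹' (X i)) ∧ c ∈ RL)))) := by
  set E := (fun y i ↦ f (y i)) '' RL
  have hE : IsClosed E := (hRL.isCompact.image (by fun_prop)).isClosed
  convert hRK.eq_iff_forall_isClopen_pi hE using 1
  · simp only [Set.ext_iff, E, mem_image, funext_iff, and_comm]
  · simp [E, Set.Nonempty, and_comm]

/-- For compact zero-dimensional second-countable Hausdorff spaces `K, L`
with closed `m`-ary relations `R^K, R^L` and a continuous surjection `f : L → K`,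
`f` satisfies the epimorphism condition for the relations iff the dual map
`F = f⁻¹ : Clop(K) → Clop(L)` preserves the induced relations `S` on clopen sets. -/
theorem stmt_4 {K L : Type*} [TopologicalSpace K] [TopologicalSpace L]
    [CompactSpace K] [CompactSpace L] [T2Space K] [T2Space L]
    [TotallyDisconnectedSpace K] [TotallyDisconnectedSpace L]
    [SecondCountableTopology K] [SecondCountableTopology L]
    {m : ℕ} (hm : 1 ≤ m)
    (RK : Set (Fin m → K)) (hRK : IsClosed RK)
    (RL : Set (Fin m → L)) (hRL : IsClosed RL)
    (f : L → K) (hf : Continuous f) (hsurj : Function.Surjective f) :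
    ((∀ x : Fin m → K, x ∈ RK ↔
        ∃ y : Fin m → L, (∀ i, f (y i) = x i) ∧ y ∈ RL) ↔
      (∀ X : Fin m → Set K, (∀ i, IsClopen (X i)) →
        ((∃ c : Fin m → K, (∀ i, c i ∈ X i) ∧ c ∈ RK) ↔
          (∃ c : Fin m → L, (∀ i, c i ∈ f ⁻¹' (X i)) ∧ c ∈ RL)))) :=
  stmt_4_general RK hRK RL hRL f hf
end

section
/- Let G and G₁ be Polish groups, let H be a closed subgroup of G such that the quotient uniform space G/H (with the quotient of the right uniformity of G) is precompact, let φ: G → G₁ be a continuous group homomorphism with dense image, and let H₁ be the closure of φ(H) in G₁. Then the quotient uniform space G₁/H₁ (with the quotient of the right uniformity of G₁) is precompact. -/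
/-!
Given an open symmetric `V₁ ∋ 1` in `G₁`, pick an open symmetric `W ∋ 1` with `W * W ⊆ V₁` and cover
`G` by finitely many sets `(φ ⁻¹' W) x H`. By density every `g₁` is `w⁻¹ * φ g` with `w ∈ W`, and
`φ g ∈ W (φ x) (φ H)`, so `g₁ ∈ V₁ (φ x) (φ H)`. Enlarging `φ H` to its closure keeps the cover.
-/

/-- The quotient uniform space `G/H` (with the quotient of the right uniformity) is
precompact iff for every open symmetric neighbourhood `V` of the identity there are
finitely many `x₁,…,xₙ ∈ G` with `G = ⋃ᵢ V xᵢ H`. -/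
def QuotPrecompact {G : Type*} [Group G] [TopologicalSpace G] (H : Subgroup G) : Prop :=
  ∀ V : Set G, IsOpen V → (1 : G) ∈ V → (∀ g ∈ V, g⁻¹ ∈ V) →
    ∃ t : Finset G, ∀ g : G, ∃ x ∈ t, ∃ v ∈ V, ∃ h ∈ H, g = v * x * h

open Topology Pointwise

theorem exists_isOpen_one_mem_inv_eq_mul_subset {G : Type*} [Group G] [TopologicalSpace G]
    [IsTopologicalGroup G] {U : Set G} (hU : U ∈ 𝓝 1) :
    ∃ W : Set G, IsOpen W ∧ (1 : G) ∈ W ∧ W⁻¹ = W ∧ W * W ⊆ U := by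
  obtain ⟨W, hW, hW1, hWU⟩ := exists_open_nhds_one_mul_subset hU
  refine ⟨W ∩ W⁻¹, hW.inter hW.inv, ⟨hW1, by simpa using hW1⟩, ?_, ?_⟩
  · rw [Set.inter_inv, inv_inv, Set.inter_comm]
  · exact (Set.mul_subset_mul Set.inter_subset_left Set.inter_subset_left).trans hWU

namespace QuotPrecompact

variable {G G₁ : Type*} [Group G] [TopologicalSpace G] [Group G₁] [TopologicalSpace G₁]

theorem mono {H K : Subgroup G} (hH : QuotPrecompact H) (hHK : H ≤ K) : QuotPrecompact K :=
  fun V hV hV1 hVinv => (hH V hV hV1 hVinv).imp fun _ ht g => by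
    obtain ⟨x, hx, v, hv, h, hh, rfl⟩ := ht g
    exact ⟨x, hx, v, hv, h, hHK hh, rfl⟩

theorem map [IsTopologicalGroup G₁] {H : Subgroup G} (hH : QuotPrecompact H) {φ : G →* G₁}
    (hφ : Continuous φ) (hdense : Dense (Set.range φ)) : QuotPrecompact (H.map φ) := by
  classical
  intro V₁ hV₁ hV₁1 _
  obtain ⟨W, hW, hW1, hWinv, hWV₁⟩ := exists_isOpen_one_mem_inv_eq_mul_subset (hV₁.mem_nhds hV₁1)
  have hW_inv_mem : ∀ w ∈ W, w⁻¹ ∈ W := fun w hw => by rwa [← Set.mem_inv, hWinv]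
  obtain ⟨t, ht⟩ := hH (φ ⁻¹' W) (hW.preimage hφ) (by simpa using hW1)
    fun g hg => by simpa using hW_inv_mem _ hg
  refine ⟨t.image φ, fun g₁ => ?_⟩
  obtain ⟨_, ⟨g, rfl⟩, w, hw, _, rfl, hwg⟩ :=
    hdense.exists_mem_open (hW.mul_right (t := {g₁})) ⟨g₁, 1, hW1, g₁, rfl, one_mul g₁⟩
  obtain ⟨x, hx, v, hv, h, hh, rfl⟩ := ht g
  refine ⟨φ x, Finset.mem_image_of_mem φ hx, w⁻¹ * φ v, hWV₁ (Set.mul_mem_mul (hW_inv_mem w hw) hv),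
    φ h, Subgroup.mem_map_of_mem φ hh, ?_⟩
  rw [map_mul, map_mul] at hwg
  rw [eq_inv_mul_of_mul_eq hwg]
  group

end QuotPrecompact

theorem stmt_15_general {G G₁ : Type*}
    [Group G] [TopologicalSpace G]
    [Group G₁] [TopologicalSpace G₁] [IsTopologicalGroup G₁]
    (H : Subgroup G) (hpre : QuotPrecompact H)
    (φ : G →* G₁) (hφ : Continuous φ) (hdense : Dense (Set.range φ)) :
    QuotPrecompact ((H.map φ).topologicalClosure) :=
  (hpre.map hφ hdense).mono (H.map φ).le_topologicalClosure

/-- if `G, G₁` are Polish groups, `H ≤ G` is closed with `G/H` precompact,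
`φ : G → G₁` is a continuous homomorphism with dense image and `H₁` is the closure of
`φ(H)`, then `G₁/H₁` is precompact. -/
theorem stmt_15 {G G₁ : Type*}
    [Group G] [TopologicalSpace G] [IsTopologicalGroup G] [PolishSpace G]
    [Group G₁] [TopologicalSpace G₁] [IsTopologicalGroup G₁] [PolishSpace G₁]
    (H : Subgroup G) (hH : IsClosed (H : Set G)) (hpre : QuotPrecompact H)
    (φ : G →* G₁) (hφ : Continuous φ) (hdense : Dense (Set.range φ)) :
    QuotPrecompact ((H.map φ).topologicalClosure) :=
  stmt_15_general H hpre φ hφ hdense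
end
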